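/- Let m ≥ 3 be odd, n = (3^m-1)/2. Suppose C is a ternary linear code of length n whose dual C^⊥ has minimum distance 4 and such that the supports of the weight-4 codewords of C^⊥ form the blocks of a Steiner system S(2,4,n), with every block supporting exactly 2 codewords of weight 4 (a codeword and its negative). Then for any two distinct coordinate positions t_1, t_2, the punctured code (C^⊥)^{{t_1,t_2}} satisfies A_1 = 0 and A_2 = 2. -/

import Mathlib

/-!
Puncturing on `{t₁, t₂}` lowers the weight of a word by the number of `tᵢ` in its support: by at
most 2, and by exactly 2 iff both lie in the support. As `D` has minimum distance 4, no punctured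
word has weight 1, and a punctured word of weight 2 comes from a weight-4 word whose support
contains `t₁` and `t₂`, i.e. from one of the two words `±y₀` on the Steiner block through them.
Their images are distinct since `-z = z` forces `z = 0` in characteristic 3.
-/

/-- Hamming weight of a vector over `ZMod 3`, indexed by any finite type. -/
def hammingWt {ι : Type*} [Fintype ι] (c : ι → ZMod 3) : ℕ :=
  (Finset.univ.filter fun j => c j ≠ 0).card

/-- Support of a vector over `ZMod 3`. -/
def hammingSupp {n : ℕ} (c : Fin n → ZMod 3) : Finset (Fin n) :=
  Finset.univ.filter fun j => c j ≠ 0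

lemma hammingWt_eq_zero_iff {ι : Type*} [Fintype ι] {c : ι → ZMod 3} :
    hammingWt c = 0 ↔ c = 0 := by
  simp [hammingWt, Finset.filter_eq_empty_iff, funext_iff]

lemma hammingWt_neg {ι : Type*} [Fintype ι] (c : ι → ZMod 3) : hammingWt (-c) = hammingWt c := by
  simp [hammingWt]

lemma neg_ne_self_of_ne_zero {ι : Type*} {c : ι → ZMod 3} (hc : c ≠ 0) : -c ≠ c := by
  obtain ⟨j, hj⟩ := Function.ne_iff.mp hc
  have eq_zero_of_neg_eq : ∀ a : ZMod 3, -a = a → a = 0 := by decide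
  exact fun h => hj (eq_zero_of_neg_eq _ (congrFun h j))

lemma hammingWt_subtype {n : ℕ} (p : Fin n → Prop) [DecidablePred p] (y : Fin n → ZMod 3) :
    hammingWt (fun j : Subtype p => y j) = ((hammingSupp y).filter p).card := by
  unfold hammingWt
  rw [← Finset.card_subtype p]
  congr 1
  ext j
  simp [hammingSupp]

def puncture {n : ℕ} (t₁ t₂ : Fin n) :
    (Fin n → ZMod 3) →ₗ[ZMod 3] ({j : Fin n // j ≠ t₁ ∧ j ≠ t₂} → ZMod 3) :=
  LinearMap.funLeft (ZMod 3) (ZMod 3) Subtype.val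

@[simp]
lemma puncture_apply {n : ℕ} (t₁ t₂ : Fin n) (y : Fin n → ZMod 3) :
    puncture t₁ t₂ y = fun j : {j : Fin n // j ≠ t₁ ∧ j ≠ t₂} => y j :=
  rfl

section Puncture

variable {n : ℕ} {t₁ t₂ : Fin n}

lemma hammingWt_puncture_add_card_inter (y : Fin n → ZMod 3) :
    hammingWt (puncture t₁ t₂ y) + (hammingSupp y ∩ {t₁, t₂}).card = hammingWt y := by
  have hfilter : (hammingSupp y).filter (fun j => j ≠ t₁ ∧ j ≠ t₂) = hammingSupp y \ {t₁, t₂} := by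
    ext j
    simp
  rw [puncture_apply, hammingWt_subtype, hfilter]
  exact Finset.card_sdiff_add_card_inter _ _

lemma ne_zero_of_hammingWt_puncture_ne_zero {y : Fin n → ZMod 3}
    (h : hammingWt (puncture t₁ t₂ y) ≠ 0) : y ≠ 0 := by
  rintro rfl
  exact h (hammingWt_eq_zero_iff.2 (map_zero _))

lemma hammingWt_le_hammingWt_puncture_add_two (y : Fin n → ZMod 3) :
    hammingWt y ≤ hammingWt (puncture t₁ t₂ y) + 2 := by
  have hsplit := hammingWt_puncture_add_card_inter (t₁ := t₁) (t₂ := t₂) y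
  have hinter : (hammingSupp y ∩ {t₁, t₂}).card ≤ 2 :=
    (Finset.card_le_card Finset.inter_subset_right).trans Finset.card_le_two
  omega

lemma hammingWt_puncture_add_two_eq_iff (ht : t₁ ≠ t₂) (y : Fin n → ZMod 3) :
    hammingWt (puncture t₁ t₂ y) + 2 = hammingWt y ↔
      t₁ ∈ hammingSupp y ∧ t₂ ∈ hammingSupp y := by
  rw [← hammingWt_puncture_add_card_inter y, add_right_inj, ← Finset.card_pair_eq_two_iff.mpr ht,
    ← Finset.singleton_subset_iff (a := t₂), ← Finset.insert_subset_iff, ← Finset.inter_eq_right,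
    ← Finset.eq_iff_card_le_of_subset Finset.inter_subset_right,
    (Finset.card_le_card Finset.inter_subset_right).ge_iff_eq', eq_comm]

end Puncture

lemma card_hammingWt_eq_two {ι : Type*} [Fintype ι] {W : Submodule (ZMod 3) (ι → ZMod 3)}
    {z₀ : ι → ZMod 3} (hz₀ : z₀ ∈ W) (hz₀0 : z₀ ≠ 0)
    (hW : ∀ z ∈ W, hammingWt z = hammingWt z₀ → z = z₀ ∨ z = -z₀) :
    Nat.card {z : W // hammingWt (z : ι → ZMod 3) = hammingWt z₀} = 2 := by
  rw [Nat.card_eq_two_iff]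
  refine ⟨⟨⟨z₀, hz₀⟩, rfl⟩, ⟨⟨-z₀, W.neg_mem hz₀⟩, hammingWt_neg z₀⟩, ?_, ?_⟩
  · intro h
    exact neg_ne_self_of_ne_zero hz₀0 (congrArg (fun z => ((z.1 : W) : ι → ZMod 3)) h).symm
  · ext ⟨⟨z, hz⟩, hw⟩
    simp only [Set.mem_insert_iff, Set.mem_singleton_iff, Set.mem_univ, iff_true, Subtype.ext_iff]
    exact hW z hz hw

section SteinerCode

variable {n : ℕ} {D : Submodule (ZMod 3) (Fin n → ZMod 3)} {t₁ t₂ : Fin n}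

lemma two_le_hammingWt_puncture (hmin : ∀ y ∈ D, y ≠ 0 → 4 ≤ hammingWt y) {y : Fin n → ZMod 3}
    (hy : y ∈ D) (hy0 : hammingWt (puncture t₁ t₂ y) ≠ 0) : 2 ≤ hammingWt (puncture t₁ t₂ y) := by
  have := hmin y hy (ne_zero_of_hammingWt_puncture_ne_zero hy0)
  have := hammingWt_le_hammingWt_puncture_add_two (t₁ := t₁) (t₂ := t₂) y
  omega

lemma eq_or_eq_neg_of_hammingWt_puncture_eq_two (hmin : ∀ y ∈ D, y ≠ 0 → 4 ≤ hammingWt y)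
    (hSteiner : ∀ t₁ t₂ : Fin n, t₁ ≠ t₂ → ∃! S : Finset (Fin n),
      (∃ y ∈ D, hammingWt y = 4 ∧ hammingSupp y = S) ∧ t₁ ∈ S ∧ t₂ ∈ S)
    (hpair : ∀ y ∈ D, ∀ y' ∈ D, hammingWt y = 4 → hammingWt y' = 4 →
      hammingSupp y = hammingSupp y' → y' = y ∨ y' = -y)
    (ht : t₁ ≠ t₂) {y₀ y : Fin n → ZMod 3} (hy₀ : y₀ ∈ D) (hw₀ : hammingWt y₀ = 4)
    (h₁ : t₁ ∈ hammingSupp y₀) (h₂ : t₂ ∈ hammingSupp y₀)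
    (hy : y ∈ D) (hw : hammingWt (puncture t₁ t₂ y) = 2) : y = y₀ ∨ y = -y₀ := by
  have hbound := hammingWt_le_hammingWt_puncture_add_two (t₁ := t₁) (t₂ := t₂) y
  have hy0 : y ≠ 0 := ne_zero_of_hammingWt_puncture_ne_zero (t₁ := t₁) (t₂ := t₂) (by omega)
  have hwt : hammingWt y = 4 := le_antisymm (by omega) (hmin y hy hy0)
  obtain ⟨h₁', h₂'⟩ := (hammingWt_puncture_add_two_eq_iff ht y).1 (by omega)
  have hsupp : hammingSupp y = hammingSupp y₀ :=
    (hSteiner t₁ t₂ ht).unique ⟨⟨y, hy, hwt, rfl⟩, h₁', h₂'⟩ ⟨⟨y₀, hy₀, hw₀, rfl⟩, h₁, h₂⟩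
  exact hpair y₀ hy₀ y hy hw₀ hwt hsupp.symm

end SteinerCode

theorem stmt_11_general (n : ℕ)
    (D : Submodule (ZMod 3) (Fin n → ZMod 3))
    (hmin : ∀ y ∈ D, y ≠ 0 → 4 ≤ hammingWt y)
    (hSteiner : ∀ t₁ t₂ : Fin n, t₁ ≠ t₂ → ∃! S : Finset (Fin n),
      (∃ y ∈ D, hammingWt y = 4 ∧ hammingSupp y = S) ∧ t₁ ∈ S ∧ t₂ ∈ S)
    (hpair : ∀ y ∈ D, ∀ y' ∈ D, hammingWt y = 4 → hammingWt y' = 4 →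
      hammingSupp y = hammingSupp y' → y' = y ∨ y' = -y)
    (t₁ t₂ : Fin n) (ht : t₁ ≠ t₂) :
    Nat.card {z : (D.map (LinearMap.funLeft (ZMod 3) (ZMod 3)
        (Subtype.val : {j : Fin n // j ≠ t₁ ∧ j ≠ t₂} → Fin n))) //
      hammingWt (z : {j : Fin n // j ≠ t₁ ∧ j ≠ t₂} → ZMod 3) = 1} = 0 ∧
    Nat.card {z : (D.map (LinearMap.funLeft (ZMod 3) (ZMod 3)
        (Subtype.val : {j : Fin n // j ≠ t₁ ∧ j ≠ t₂} → Fin n))) //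
      hammingWt (z : {j : Fin n // j ≠ t₁ ∧ j ≠ t₂} → ZMod 3) = 2} = 2 := by
  change Nat.card {z : D.map (puncture t₁ t₂) // _} = 0 ∧
    Nat.card {z : D.map (puncture t₁ t₂) // _} = 2
  obtain ⟨-, ⟨⟨y₀, hy₀, hw₀, rfl⟩, h₁, h₂⟩, -⟩ := hSteiner t₁ t₂ ht
  have hpw₀ : hammingWt (puncture t₁ t₂ y₀) = 2 := by
    have := (hammingWt_puncture_add_two_eq_iff ht y₀).2 ⟨h₁, h₂⟩
    omega
  constructor
  · refine Nat.card_eq_zero.2 (Or.inl ⟨?_⟩)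
    rintro ⟨⟨_, y, hy, rfl⟩, hw⟩
    change hammingWt (puncture t₁ t₂ y) = 1 at hw
    have := two_le_hammingWt_puncture (t₁ := t₁) (t₂ := t₂) hmin hy (by omega)
    omega
  · have hz₀0 : puncture t₁ t₂ y₀ ≠ 0 := hammingWt_eq_zero_iff.not.1 (by omega)
    have hclass : ∀ z ∈ D.map (puncture t₁ t₂), hammingWt z = hammingWt (puncture t₁ t₂ y₀) →
        z = puncture t₁ t₂ y₀ ∨ z = -puncture t₁ t₂ y₀ := by
      rintro _ ⟨y, hy, rfl⟩ hw
      rcases eq_or_eq_neg_of_hammingWt_puncture_eq_two hmin hSteiner hpair ht hy₀ hw₀ h₁ h₂ hy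
        (hw.trans hpw₀) with rfl | rfl
      · exact .inl rfl
      · exact .inr (map_neg _ _)
    have hcard := card_hammingWt_eq_two (D.mem_map_of_mem hy₀) hz₀0 hclass
    rwa [hpw₀] at hcard

theorem stmt_11 (m : ℕ) (hm : 3 ≤ m) (hodd : Odd m) (n : ℕ) (hn : n = (3 ^ m - 1) / 2)
    (C D : Submodule (ZMod 3) (Fin n → ZMod 3))
    (hD : ∀ y, y ∈ D ↔ ∀ x ∈ C, ∑ j, x j * y j = 0)
    (hmin : ∀ y ∈ D, y ≠ 0 → 4 ≤ hammingWt y)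
    (hex : ∃ y ∈ D, hammingWt y = 4)
    (hSteiner : ∀ t₁ t₂ : Fin n, t₁ ≠ t₂ → ∃! S : Finset (Fin n),
      (∃ y ∈ D, hammingWt y = 4 ∧ hammingSupp y = S) ∧ t₁ ∈ S ∧ t₂ ∈ S)
    (hpair : ∀ y ∈ D, ∀ y' ∈ D, hammingWt y = 4 → hammingWt y' = 4 →
      hammingSupp y = hammingSupp y' → y' = y ∨ y' = -y)
    (t₁ t₂ : Fin n) (ht : t₁ ≠ t₂) :
    Nat.card {z : (D.map (LinearMap.funLeft (ZMod 3) (ZMod 3)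
        (Subtype.val : {j : Fin n // j ≠ t₁ ∧ j ≠ t₂} → Fin n))) //
      hammingWt (z : {j : Fin n // j ≠ t₁ ∧ j ≠ t₂} → ZMod 3) = 1} = 0 ∧
    Nat.card {z : (D.map (LinearMap.funLeft (ZMod 3) (ZMod 3)
        (Subtype.val : {j : Fin n // j ≠ t₁ ∧ j ≠ t₂} → Fin n))) //
      hammingWt (z : {j : Fin n // j ≠ t₁ ∧ j ≠ t₂} → ZMod 3) = 2} = 2 :=
  stmt_11_general n D hmin hSteiner hpair t₁ t₂ ht
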